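/- arXiv:2506.06033 — 2 statements merged into one kernel-verified Lean document; each statement's English description precedes it below -/
import Mathlib

section
/- Let (Ω, μ) be a probability space and let A, B, Y, E be measurable events. Assume the consistency conditions A ∩ E = Y ∩ E and B ∩ Eᶜ = Yᶜ ∩ Eᶜ, and the independence conditions μ(A ∩ (Yᶜ ∩ Eᶜ)) = μ(A) · μ(Yᶜ ∩ Eᶜ) and μ(B ∩ (Y ∩ E)) = μ(B) · μ(Y ∩ E). Then the probability of joint sufficiency and necessity PNS := μ(A ∩ B) satisfies PNS = μ(Yᶜ ∩ Eᶜ) · PS + μ(Y ∩ E) · PN, where PS := μ(A) is the probability of sufficiency and PN := μ(B) is the probability of necessity. -/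
open MeasureTheory

/-! Split `A ∩ B` along `E`. On `E` consistency replaces `A` by `Y`, on `Eᶜ` it replaces `B`
by `Yᶜ`, so the two pieces are `B ∩ (Y ∩ E)` and `A ∩ (Yᶜ ∩ Eᶜ)`, and independence factorises
the measure of each. -/

theorem Set.inter_inter_eq_of_inter_eq {α : Type*} {A B Y E : Set α} (h : A ∩ E = Y ∩ E) :
    A ∩ B ∩ E = B ∩ (Y ∩ E) := by
  rw [Set.inter_right_comm, h, Set.inter_comm]

theorem stmt_1_general {Ω : Type*} [MeasurableSpace Ω] (μ : Measure Ω)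
    (A B Y E : Set Ω)
    (hEm : MeasurableSet E)
    (hconsA : A ∩ E = Y ∩ E) (hconsB : B ∩ Eᶜ = Yᶜ ∩ Eᶜ)
    (hindA : μ (A ∩ (Yᶜ ∩ Eᶜ)) = μ A * μ (Yᶜ ∩ Eᶜ))
    (hindB : μ (B ∩ (Y ∩ E)) = μ B * μ (Y ∩ E)) :
    μ (A ∩ B) = μ (Yᶜ ∩ Eᶜ) * μ A + μ (Y ∩ E) * μ B :=
  calc μ (A ∩ B) = μ (A ∩ B ∩ E) + μ (A ∩ B ∩ Eᶜ) := (measure_inter_add_sdiff _ hEm).symm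
    _ = μ (B ∩ (Y ∩ E)) + μ (A ∩ (Yᶜ ∩ Eᶜ)) := by
      rw [Set.inter_inter_eq_of_inter_eq hconsA, Set.inter_comm A B,
        Set.inter_inter_eq_of_inter_eq hconsB]
    _ = μ (Yᶜ ∩ Eᶜ) * μ A + μ (Y ∩ E) * μ B := by
      rw [hindA, hindB, add_comm, mul_comm (μ A), mul_comm (μ B)]

theorem stmt_1 {Ω : Type*} [MeasurableSpace Ω] (μ : Measure Ω)
    [IsProbabilityMeasure μ] (A B Y E : Set Ω)
    (hAm : MeasurableSet A) (hBm : MeasurableSet B)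
    (hYm : MeasurableSet Y) (hEm : MeasurableSet E)
    (hconsA : A ∩ E = Y ∩ E) (hconsB : B ∩ Eᶜ = Yᶜ ∩ Eᶜ)
    (hindA : μ (A ∩ (Yᶜ ∩ Eᶜ)) = μ A * μ (Yᶜ ∩ Eᶜ))
    (hindB : μ (B ∩ (Y ∩ E)) = μ B * μ (Y ∩ E)) :
    μ (A ∩ B) = μ (Yᶜ ∩ Eᶜ) * μ A + μ (Y ∩ E) * μ B :=
  stmt_1_general μ A B Y E hEm hconsA hconsB hindA hindB
end

section
/- Let α be a type with decidable equality and let R : Finset α → Finset α → Prop be a relation on finsets of α that is reflexive, transitive, union-dominating (R (A ∪ B) A and R (A ∪ B) B for all A, B), and conjunctive (if R S A and R S B then R S (A ∪ B)). Define a merge step on multisets of finsets: a multiset M steps to M' if M' is obtained from M by removing two elements A and B and inserting C, where either (C = A and R A B), or (C = B and R B A), or C = A ∪ B. Let D be a nonempty finset of α and let M₀ be the multiset consisting of the singletons {x} for x ∈ D. If some finite sequence of merge steps starting from M₀ reaches the one-element multiset {T}, then R T {x} holds for every x ∈ D, and consequently R T D holds. -/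
/-!
A merged node dominates both nodes it replaces, so by transitivity the property "some node of the
current multiset dominates a given set" survives every merge step. Each singleton `{x}` with `x ∈ D` starts
out dominated by itself, hence at the end by the root `T`; conjunctivity then assembles `D` from its
singletons.
-/

/-- One merge step of the tree-based approximation algorithm: remove two
elements `A`, `B` from the multiset and insert `C`, where `C = A` if
`R A B`, `C = B` if `R B A`, or `C = A ∪ B` otherwise. -/
def MergeStep {α : Type*} [DecidableEq α] (R : Finset α → Finset α → Prop)
    (M M' : Multiset (Finset α)) : Prop :=
  ∃ A B C : Finset α, A ∈ M ∧ B ∈ M.erase A ∧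
    ((C = A ∧ R A B) ∨ (C = B ∧ R B A) ∨ C = A ∪ B) ∧
    M' = C ::ₘ (M.erase A).erase B

section Merge

variable {α : Type*} [DecidableEq α] {R : Finset α → Finset α → Prop}

theorem rel_self_of_rel_union (hdom : ∀ A B : Finset α, R (A ∪ B) A ∧ R (A ∪ B) B)
    (S : Finset α) : R S S := by
  simpa using (hdom S S).1

theorem rel_merge_left_right (hdom : ∀ A B : Finset α, R (A ∪ B) A ∧ R (A ∪ B) B)
    {A B C : Finset α} (hC : (C = A ∧ R A B) ∨ (C = B ∧ R B A) ∨ C = A ∪ B) :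
    R C A ∧ R C B := by
  rcases hC with ⟨rfl, hAB⟩ | ⟨rfl, hBA⟩ | rfl
  · exact ⟨rel_self_of_rel_union hdom C, hAB⟩
  · exact ⟨hBA, rel_self_of_rel_union hdom C⟩
  · exact hdom A B

theorem MergeStep.exists_rel_of_mem (hdom : ∀ A B : Finset α, R (A ∪ B) A ∧ R (A ∪ B) B)
    {M M' : Multiset (Finset α)} (h : MergeStep R M M') {S : Finset α} (hS : S ∈ M) :
    ∃ S' ∈ M', R S' S := by
  obtain ⟨A, B, C, -, -, hC, rfl⟩ := h
  obtain ⟨hCA, hCB⟩ := rel_merge_left_right hdom hC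
  by_cases hSA : S = A
  · exact ⟨C, Multiset.mem_cons_self _ _, hSA ▸ hCA⟩
  by_cases hSB : S = B
  · exact ⟨C, Multiset.mem_cons_self _ _, hSB ▸ hCB⟩
  have hS' : S ∈ (M.erase A).erase B :=
    (Multiset.mem_erase_of_ne hSB).2 ((Multiset.mem_erase_of_ne hSA).2 hS)
  exact ⟨S, Multiset.mem_cons_of_mem hS', rel_self_of_rel_union hdom S⟩

theorem exists_rel_of_reflTransGen_mergeStep (htrans : ∀ S T U : Finset α, R S T → R T U → R S U)
    (hdom : ∀ A B : Finset α, R (A ∪ B) A ∧ R (A ∪ B) B)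
    {M M' : Multiset (Finset α)} (h : Relation.ReflTransGen (MergeStep R) M M')
    {S : Finset α} (hS : S ∈ M) : ∃ S' ∈ M', R S' S := by
  induction h with
  | refl => exact ⟨S, hS, rel_self_of_rel_union hdom S⟩
  | tail _ hstep ih =>
    obtain ⟨S₁, hS₁, hS₁S⟩ := ih
    obtain ⟨S₂, hS₂, hS₂S₁⟩ := hstep.exists_rel_of_mem hdom hS₁
    exact ⟨S₂, hS₂, htrans _ _ _ hS₂S₁ hS₁S⟩

theorem rel_of_forall_rel_singleton (hdom : ∀ A B : Finset α, R (A ∪ B) A ∧ R (A ∪ B) B)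
    (hconj : ∀ S A B : Finset α, R S A → R S B → R S (A ∪ B)) {T D : Finset α}
    (h : ∀ x ∈ D, R T {x}) : R T D := by
  induction D using Finset.induction_on with
  | empty => simpa using (hdom T ∅).2
  | insert a s _ ih =>
    rw [Finset.insert_eq]
    exact hconj _ _ _ (h a (Finset.mem_insert_self a s))
      (ih fun x hx => h x (Finset.mem_insert_of_mem hx))

end Merge

theorem stmt_4_general {α : Type*} [DecidableEq α] (R : Finset α → Finset α → Prop)
    (htrans : ∀ S T U : Finset α, R S T → R T U → R S U)
    (hdom : ∀ A B : Finset α, R (A ∪ B) A ∧ R (A ∪ B) B)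
    (hconj : ∀ S A B : Finset α, R S A → R S B → R S (A ∪ B))
    (D : Finset α) (T : Finset α)
    (hreach : Relation.ReflTransGen (MergeStep R)
      (D.val.map (fun x => ({x} : Finset α))) {T}) :
    (∀ x ∈ D, R T {x}) ∧ R T D := by
  have hsingleton : ∀ x ∈ D, R T {x} := fun x hx => by
    obtain ⟨S, hS, hSx⟩ :=
      exists_rel_of_reflTransGen_mergeStep htrans hdom hreach (Multiset.mem_map_of_mem _ hx)
    rwa [Multiset.mem_singleton.1 hS] at hSx
  exact ⟨hsingleton, rel_of_forall_rel_singleton hdom hconj hsingleton⟩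

theorem stmt_4 {α : Type*} [DecidableEq α] (R : Finset α → Finset α → Prop)
    (hrefl : ∀ S : Finset α, R S S)
    (htrans : ∀ S T U : Finset α, R S T → R T U → R S U)
    (hdom : ∀ A B : Finset α, R (A ∪ B) A ∧ R (A ∪ B) B)
    (hconj : ∀ S A B : Finset α, R S A → R S B → R S (A ∪ B))
    (D : Finset α) (hD : D.Nonempty) (T : Finset α)
    (hreach : Relation.ReflTransGen (MergeStep R)
      (D.val.map (fun x => ({x} : Finset α))) {T}) :
    (∀ x ∈ D, R T {x}) ∧ R T D :=
  stmt_4_general R htrans hdom hconj D T hreach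
end
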